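/- Being a cosheaf for a cover is not inherited by coarser covers: over any field k, there exist a topological space X, an open set U of X, Čech covers 𝒰₁ and 𝒰₂ of U such that 𝒰₁ refines 𝒰₂ (every member of 𝒰₂ contains some member of 𝒰₁), and a functor F : Open(X) ⥤ Vect_k to the category of k-vector spaces, such that the canonical map colim (F ∘ ι_{𝒰₁}) → F(U) is an isomorphism but the canonical map colim (F ∘ ι_{𝒰₂}) → F(U) is not an isomorphism. -/

import Mathlib

/-!
Being a cosheaf for a cover is not inherited by coarser covers: over any field
`k` there are a space `X`, an open set `U`, Čech covers `𝒰₁`, `𝒰₂` of `U` with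
`𝒰₁` refining `𝒰₂`, and a functor `F : Open(X) ⥤ Vect_k` that is a cosheaf for
`𝒰₁` but not for `𝒰₂`.
-/

open CategoryTheory Limits TopologicalSpace

/-- The inclusion `ι_𝒰 : 𝒰 ⥤ Open(X)` of a collection of open sets, viewed as a
full subposet, into `Open(X)`. -/
def coverInclusion {X : Type} [TopologicalSpace X] (𝒰 : Set (Opens X)) :
    ↥𝒰 ⥤ Opens X :=
  Monotone.functor (f := Subtype.val) (fun _ _ h => h)

/-- Given a collection `𝒰` of open sets all contained in `U`, the cocone on
`F ∘ ι_𝒰` with point `F(U)` whose legs are the maps `F(V) → F(U)`. -/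
def coverCocone {X : Type} [TopologicalSpace X] {C : Type*} [Category C]
    (F : Opens X ⥤ C) {U : Opens X} {𝒰 : Set (Opens X)}
    (h : ∀ V ∈ 𝒰, V ≤ U) : Cocone (coverInclusion 𝒰 ⋙ F) where
  pt := F.obj U
  ι :=
    { app := fun V => F.map (homOfLE (h V V.2))
      naturality := fun V W f => by
        dsimp
        rw [Category.comp_id, ← F.map_comp]
        congr 1 }

/-- Every member of a cover of `U` is contained in `U`. -/
lemma coverLE {X : Type} [TopologicalSpace X] {𝒰 : Set (Opens X)} {U : Opens X}
    (hcover : (⋃ V ∈ 𝒰, (V : Set X)) = (U : Set X)) : ∀ V ∈ 𝒰, V ≤ U := by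
  intro V hV
  have : (V : Set X) ⊆ (U : Set X) := by
    rw [← hcover]; exact Set.subset_biUnion_of_mem hV
  exact this

/-- auxiliary: a minimum of a family computes the intersection -/
lemma aux_biInter_eq_min {X : Type} [TopologicalSpace X] {t : Set (Opens X)}
    {W : Opens X} (hW : W ∈ t) (h : ∀ V ∈ t, (W : Set X) ⊆ V) :
    (W : Set X) = ⋂ V ∈ t, (V : Set X) :=
  subset_antisymm (Set.subset_iInter₂ h) (Set.biInter_subset_of_mem hW)

noncomputable def auxV0 : Opens Bool := ⟨{false}, isOpen_discrete _⟩
noncomputable def auxV1 : Opens Bool := ⟨{true}, isOpen_discrete _⟩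

lemma aux_not_mem_01 : ∀ x : Bool, ¬ (x ∈ auxV0 ∧ x ∈ auxV1) := by
  rintro x ⟨h0, h1⟩
  cases x
  · simp [auxV1] at h1
  · simp [auxV0] at h0

/-- The constant functor `Open(Bool) ⥤ Vect_k` with value `k`. -/
noncomputable def auxF (k : Type) [Field k] : Opens Bool ⥤ ModuleCat.{0} k :=
  (Functor.const (Opens Bool)).obj (ModuleCat.of k k)

@[simp] lemma auxF_obj (k : Type) [Field k] (V : Opens Bool) :
    (auxF k).obj V = ModuleCat.of k k := rfl

@[simp] lemma auxF_map (k : Type) [Field k] {V W : Opens Bool} (f : V ⟶ W) :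
    (auxF k).map f = 𝟙 (ModuleCat.of k k) := rfl

/-- **The cosheaf property is not inherited by coarser covers.**  For every
field `k` there exist a topological space `X`, an open set `U`, Čech covers
`𝒰₁`, `𝒰₂` of `U` such that `𝒰₁` refines `𝒰₂`, and a functor
`F : Open(X) ⥤ Vect_k` such that the canonical map `colim (F ∘ ι_{𝒰₁}) → F(U)`
is an isomorphism while the canonical map `colim (F ∘ ι_{𝒰₂}) → F(U)` is not. -/
theorem cosheaf_not_inherited_by_coarser_covers (k : Type) [Field k] :
    ∃ (X : Type) (_ : TopologicalSpace X) (U : Opens X)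
      (𝒰₁ 𝒰₂ : Set (Opens X)) (F : Opens X ⥤ ModuleCat.{0} k)
      (hcover₁ : (⋃ V ∈ 𝒰₁, (V : Set X)) = (U : Set X))
      (hcover₂ : (⋃ V ∈ 𝒰₂, (V : Set X)) = (U : Set X)),
      (∀ t ⊆ 𝒰₁, t.Finite → t.Nonempty → (⋂ V ∈ t, (V : Set X)).Nonempty →
        ∃ W ∈ 𝒰₁, (W : Set X) = ⋂ V ∈ t, (V : Set X)) ∧
      (∀ t ⊆ 𝒰₂, t.Finite → t.Nonempty → (⋂ V ∈ t, (V : Set X)).Nonempty →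
        ∃ W ∈ 𝒰₂, (W : Set X) = ⋂ V ∈ t, (V : Set X)) ∧
      (∀ W ∈ 𝒰₂, ∃ V ∈ 𝒰₁, V ≤ W) ∧
      IsIso (colimit.desc (coverInclusion 𝒰₁ ⋙ F)
        (coverCocone F (coverLE hcover₁))) ∧
      ¬ IsIso (colimit.desc (coverInclusion 𝒰₂ ⋙ F)
        (coverCocone F (coverLE hcover₂))) := by
  classical
  set 𝒰₁ : Set (Opens Bool) := {auxV0, auxV1, ⊤} with h𝒰₁
  set 𝒰₂ : Set (Opens Bool) := {auxV0, auxV1} with h𝒰₂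
  have hcover₂ : (⋃ V ∈ 𝒰₂, (V : Set Bool)) = ((⊤ : Opens Bool) : Set Bool) := by
    ext x; cases x <;> simp [h𝒰₂, auxV0, auxV1]
  have hcover₁ : (⋃ V ∈ 𝒰₁, (V : Set Bool)) = ((⊤ : Opens Bool) : Set Bool) := by
    ext x; cases x <;> simp [h𝒰₁, auxV0, auxV1]
  have cech₂ : ∀ t ⊆ 𝒰₂, t.Finite → t.Nonempty →
      (⋂ V ∈ t, (V : Set Bool)).Nonempty →
      ∃ W ∈ 𝒰₂, (W : Set Bool) = ⋂ V ∈ t, (V : Set Bool) := by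
    intro t ht _ _ hint
    have hnotboth : ¬ (auxV0 ∈ t ∧ auxV1 ∈ t) := by
      rintro ⟨h0, h1⟩
      obtain ⟨x, hx⟩ := hint
      exact aux_not_mem_01 x ⟨Set.mem_iInter₂.mp hx auxV0 h0,
        Set.mem_iInter₂.mp hx auxV1 h1⟩
    by_cases h0 : auxV0 ∈ t
    · refine ⟨auxV0, by simp [h𝒰₂], aux_biInter_eq_min h0 ?_⟩
      intro V hV
      rcases ht hV with rfl | rfl
      · exact le_refl _
      · exact absurd ⟨h0, hV⟩ hnotboth
    · have h1 : auxV1 ∈ t := by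
        obtain ⟨V, hV⟩ := ‹t.Nonempty›
        rcases ht hV with rfl | rfl
        · exact absurd hV h0
        · exact hV
      refine ⟨auxV1, by simp [h𝒰₂], aux_biInter_eq_min h1 ?_⟩
      intro V hV
      rcases ht hV with rfl | rfl
      · exact absurd hV h0
      · exact le_refl _
  have cech₁ : ∀ t ⊆ 𝒰₁, t.Finite → t.Nonempty →
      (⋂ V ∈ t, (V : Set Bool)).Nonempty →
      ∃ W ∈ 𝒰₁, (W : Set Bool) = ⋂ V ∈ t, (V : Set Bool) := by
    intro t ht _ _ hint
    have hnotboth : ¬ (auxV0 ∈ t ∧ auxV1 ∈ t) := by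
      rintro ⟨h0, h1⟩
      obtain ⟨x, hx⟩ := hint
      exact aux_not_mem_01 x ⟨Set.mem_iInter₂.mp hx auxV0 h0,
        Set.mem_iInter₂.mp hx auxV1 h1⟩
    by_cases h0 : auxV0 ∈ t
    · refine ⟨auxV0, by simp [h𝒰₁], aux_biInter_eq_min h0 ?_⟩
      intro V hV
      rcases ht hV with rfl | rfl | rfl
      · exact le_refl _
      · exact absurd ⟨h0, hV⟩ hnotboth
      · exact le_top
    · by_cases h1 : auxV1 ∈ t
      · refine ⟨auxV1, by simp [h𝒰₁], aux_biInter_eq_min h1 ?_⟩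
        intro V hV
        rcases ht hV with rfl | rfl | rfl
        · exact absurd hV h0
        · exact le_refl _
        · exact le_top
      · have hT : (⊤ : Opens Bool) ∈ t := by
          obtain ⟨V, hV⟩ := ‹t.Nonempty›
          rcases ht hV with rfl | rfl | rfl
          · exact absurd hV h0
          · exact absurd hV h1
          · exact hV
        refine ⟨⊤, by simp [h𝒰₁], aux_biInter_eq_min hT ?_⟩
        intro V hV
        rcases ht hV with rfl | rfl | rfl
        · exact absurd hV h0
        · exact absurd hV h1
        · exact le_refl _
  refine ⟨Bool, inferInstance, ⊤, 𝒰₁, 𝒰₂, auxF k, hcover₁, hcover₂, cech₁, cech₂,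
    fun W hW => ⟨W, by rcases hW with rfl | rfl <;> simp [h𝒰₁], le_refl _⟩, ?_, ?_⟩
  · -- iso for 𝒰₁
    have hTmem : (⊤ : Opens Bool) ∈ 𝒰₁ := by simp [h𝒰₁]
    have hc : IsColimit (coverCocone (auxF k) (coverLE hcover₁)) :=
      { desc := fun s => s.ι.app ⟨⊤, hTmem⟩
        fac := fun s V => by
          have hn := s.ι.naturality
            (homOfLE (Subtype.coe_le_coe.mp (le_top (a := (V : Opens Bool))))
              : V ⟶ ⟨⊤, hTmem⟩)
          simp [coverCocone, coverInclusion] at hn ⊢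
          exact hn
        uniq := fun s m hm => by
          have := hm ⟨⊤, hTmem⟩
          simp [coverCocone, coverInclusion] at this
          exact (Category.id_comp m).symm.trans this }
    refine ⟨hc.desc (colimit.cocone _), ?_, ?_⟩
    · apply colimit.hom_ext; intro j
      rw [colimit.ι_desc_assoc, hc.fac, colimit.cocone_ι, Category.comp_id]
    · apply hc.hom_ext; intro j
      rw [← Category.assoc, hc.fac, colimit.cocone_ι, colimit.ι_desc, Category.comp_id]
  · -- not iso for 𝒰₂
    intro hiso
    set d := colimit.desc (coverInclusion 𝒰₂ ⋙ auxF k)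
      (coverCocone (auxF k) (coverLE hcover₂)) with hd
    have h0mem : auxV0 ∈ 𝒰₂ := by simp [h𝒰₂]
    have h1mem : auxV1 ∈ 𝒰₂ := by simp [h𝒰₂]
    have key : colimit.ι (coverInclusion 𝒰₂ ⋙ auxF k) ⟨auxV0, h0mem⟩
        = colimit.ι (coverInclusion 𝒰₂ ⋙ auxF k) ⟨auxV1, h1mem⟩ := by
      have e0 : colimit.ι (coverInclusion 𝒰₂ ⋙ auxF k) ⟨auxV0, h0mem⟩ ≫ d
          = 𝟙 (ModuleCat.of k k) := by
        rw [hd, colimit.ι_desc]; simp [coverCocone]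
      have e1 : colimit.ι (coverInclusion 𝒰₂ ⋙ auxF k) ⟨auxV1, h1mem⟩ ≫ d
          = 𝟙 (ModuleCat.of k k) := by
        rw [hd, colimit.ι_desc]; simp [coverCocone]
      exact (cancel_mono d).mp (e0.trans e1.symm)
    have hne : (⟨auxV1, h1mem⟩ : ↥𝒰₂) ≠ ⟨auxV0, h0mem⟩ := by
      intro h
      have hv : auxV1 = auxV0 := congrArg Subtype.val h
      exact aux_not_mem_01 true
        ⟨hv ▸ (by simp [auxV1] : (true : Bool) ∈ auxV1), by simp [auxV1]⟩
    set s : Cocone (coverInclusion 𝒰₂ ⋙ auxF k) :=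
      { pt := ModuleCat.of k k
        ι :=
          { app := fun V => if V = (⟨auxV0, h0mem⟩ : ↥𝒰₂) then
              𝟙 (ModuleCat.of k k) else 0
            naturality := fun A B f => by
              have hAB : A = B := by
                have hle : (A : Opens Bool) ≤ (B : Opens Bool) := leOfHom f
                rcases A.2 with hA | hA <;> rcases B.2 with hB | hB
                · exact Subtype.ext (hA.trans hB.symm)
                · exfalso
                  have hmem : (false : Bool) ∈ (B : Opens Bool) :=
                    hle (by rw [hA]; simp [auxV0])
                  rw [hB] at hmem
                  exact aux_not_mem_01 false ⟨by simp [auxV0], hmem⟩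
                · exfalso
                  have hmem : (true : Bool) ∈ (B : Opens Bool) :=
                    hle (by rw [hA]; simp [auxV1])
                  rw [hB] at hmem
                  exact aux_not_mem_01 true ⟨hmem, by simp [auxV1]⟩
                · exact Subtype.ext (hA.trans hB.symm)
              subst hAB
              simp [coverInclusion] } } with hs
    have e0 : colimit.ι (coverInclusion 𝒰₂ ⋙ auxF k) ⟨auxV0, h0mem⟩ ≫
        colimit.desc _ s = 𝟙 (ModuleCat.of k k) := by
      rw [colimit.ι_desc]; exact if_pos rfl
    have e1 : colimit.ι (coverInclusion 𝒰₂ ⋙ auxF k) ⟨auxV1, h1mem⟩ ≫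
        colimit.desc _ s = 0 := by
      rw [colimit.ι_desc]; exact if_neg hne
    rw [key] at e0
    replace e0 := e1.symm.trans e0
    have hone : (1 : k) = 0 := by
      have h := congrArg
        (fun g : ModuleCat.of k k ⟶ ModuleCat.of k k => g (1 : k)) e0.symm
      simp [ModuleCat.id_apply] at h
      exact h.trans (LinearMap.zero_apply (1 : k))
    exact one_ne_zero hone
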